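/- arXiv:2208.05628 — 4 statements merged into one kernel-verified Lean document; each statement's English description precedes it below -/
import Mathlib

section
/- Let ρ be a density matrix on a finite-dimensional Hilbert space A ≅ A_g ⊗ A_p with dim A_g = d₁, dim A_p = d₂, and let Π be a rank-d₁ orthogonal projector on A with Tr[Πρ] ≥ 1 − ε. Then there exist a unitary U on A, a density matrix ρ̃ on A_g, and a unit vector |0⟩ ∈ A_p such that ‖UρU† − ρ̃ ⊗ |0⟩⟨0|‖₁ ≤ 3√ε. -/
open Matrix BigOperators ComplexOrder Kronecker

noncomputable def traceNorm {n : Type*} [Fintype n] [DecidableEq n] (A : Matrix n n ℂ) : ℝ :=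
  (((Matrix.posSemidef_conjTranspose_mul_self A).1.eigenvectorUnitary.1 *
      diagonal (((↑) : ℝ → ℂ) ∘ Real.sqrt ∘ (Matrix.posSemidef_conjTranspose_mul_self A).1.eigenvalues) *
      (star (Matrix.posSemidef_conjTranspose_mul_self A).1.eigenvectorUnitary : Matrix n n ℂ)).trace).re

/-!
A unitary conjugation turns `Π` into the diagonal projector `D` onto the vectors `eᵢ ⊗ e_{k₀}`,
so we may assume `Π = D` and put `t = Tr[Dρ] ≥ 1 - ε`. Then `DρD = σ ⊗ |k₀⟩⟨k₀|` with
`Tr σ = t`, and with `ρ̃ = σ / t` (any state if `t = 0`)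
`ρ - ρ̃ ⊗ |k₀⟩⟨k₀| = (ρ - DρD) - (1 - t) ρ̃ ⊗ |k₀⟩⟨k₀|`.
The gentle measurement lemma bounds the first term by `2√(1 - t)`, and the second has trace norm
`1 - t ≤ √(1 - t)`.

For the trace norm we only need Hermitian matrices `A`: there `‖A‖₁ = Re Tr[T A]` for the unitary
`T = sign A`, while `Re Tr[S X] ≤ Tr X` for `X ≥ 0` and unitary `S` by Cauchy–Schwarz. This gives
the triangle inequality.
-/

open scoped MatrixOrder

theorem Equiv.Perm.exists_iff_of_card_eq {α : Type*} [Fintype α] {p q : α → Prop}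
    [DecidablePred p] [DecidablePred q] (h : Fintype.card {x // p x} = Fintype.card {x // q x}) :
    ∃ π : Equiv.Perm α, ∀ x, q (π x) ↔ p x := by
  have hc : Fintype.card {x // ¬p x} = Fintype.card {x // ¬q x} := by
    rw [Fintype.card_subtype_compl, Fintype.card_subtype_compl, h]
  refine ⟨Equiv.subtypeCongr (Fintype.equivOfCardEq h) (Fintype.equivOfCardEq hc), fun x => ?_⟩
  by_cases hx : p x
  · simpa [Equiv.subtypeCongr, hx] using (Fintype.equivOfCardEq h ⟨x, hx⟩).2
  · simpa [Equiv.subtypeCongr, hx] using (Fintype.equivOfCardEq hc ⟨x, hx⟩).2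

namespace Matrix

theorem submatrix_mul_mul_conjTranspose_submatrix {l m n R : Type*} [Fintype n]
    [CommSemiring R] [StarRing R] (M : Matrix m n R) (N : Matrix n n R) (e : l ≃ m) :
    M.submatrix e id * N * (M.submatrix e id)ᴴ = (M * N * Mᴴ).submatrix e e := by
  ext i j
  simp [mul_apply, conjTranspose_apply]

section

variable {n : Type*} [Fintype n]

theorem trace_mul_mul_self_of_isIdempotentElem {R : Type*} [CommSemiring R] {P : Matrix n n R}
    (hP : IsIdempotentElem P) (X : Matrix n n R) : (P * X * P).trace = (P * X).trace := by
  rw [trace_mul_cycle, hP.eq]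

theorem PosSemidef.re_trace_nonneg {A : Matrix n n ℂ} (hA : A.PosSemidef) : 0 ≤ A.trace.re :=
  (Complex.le_def.1 hA.trace_nonneg).1

theorem PosSemidef.ofReal_re_trace {A : Matrix n n ℂ} (hA : A.PosSemidef) :
    (A.trace.re : ℂ) = A.trace :=
  (Complex.eq_re_of_ofReal_le (r := 0) (by rw [Complex.ofReal_zero]; exact hA.trace_nonneg)).symm

theorem PosSemidef.mul_mul_same_of_isHermitian {A B : Matrix n n ℂ} (hA : A.PosSemidef)
    (hB : B.IsHermitian) : (B * A * B).PosSemidef := by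
  simpa only [hB.eq] using hA.mul_mul_conjTranspose_same B

/-- Cauchy–Schwarz for the semi-inner product `⟪Y, X⟫ = Tr[X M Yᴴ]` induced by `M ≥ 0`. -/
theorem re_trace_mul_mul_conjTranspose_le {M : Matrix n n ℂ} (hM : M.PosSemidef)
    (X Y : Matrix n n ℂ) :
    (X * M * Yᴴ).trace.re ≤ √(X * M * Xᴴ).trace.re * √(Y * M * Yᴴ).trace.re := by
  let := M.toMatrixSeminormedAddCommGroup hM
  let := M.toMatrixInnerProductSpace hM
  have := re_inner_le_norm (𝕜 := ℂ) Y X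
  rwa [norm_eq_sqrt_re_inner (𝕜 := ℂ) X, norm_eq_sqrt_re_inner (𝕜 := ℂ) Y, mul_comm] at this

end

section

variable {n : Type*} [Fintype n] [DecidableEq n]

theorem trace_mul_mul_conjTranspose_of_mem_unitaryGroup {R : Type*} [CommRing R] [StarRing R]
    {U : Matrix n n R} (hU : U ∈ unitaryGroup n R) (X : Matrix n n R) :
    (U * X * Uᴴ).trace = X.trace := by
  rw [trace_mul_cycle, ← star_eq_conjTranspose, mem_unitaryGroup_iff'.1 hU, one_mul]

theorem isStarProjection_diagonal_ite {R : Type*} [Semiring R] [StarRing R] (p : n → Prop)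
    [DecidablePred p] : IsStarProjection (diagonal fun x => if p x then (1 : R) else 0) := by
  constructor
  · rw [IsIdempotentElem, diagonal_mul_diagonal]
    congr 1; funext x; split_ifs <;> simp
  · rw [IsSelfAdjoint, star_eq_conjTranspose, diagonal_conjTranspose]
    congr 1; funext x; by_cases h : p x <;> simp [h]

theorem IsHermitian.eigenvalues_eq_zero_or_one {𝕜 : Type*} [RCLike 𝕜] {Q : Matrix n n 𝕜}
    (hQ : Q.IsHermitian) (hQ' : IsIdempotentElem Q) (i : n) :
    hQ.eigenvalues i = 0 ∨ hQ.eigenvalues i = 1 := by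
  simpa using hQ'.spectrum_subset ℝ (hQ.eigenvalues_mem_spectrum_real i)

theorem IsStarProjection.exists_unitary_conj_eq_diagonal {𝕜 : Type*} [RCLike 𝕜]
    {Q : Matrix n n 𝕜} (hQ : IsStarProjection Q) (p : n → Prop) [DecidablePred p]
    (hrank : Q.rank = Fintype.card {x // p x}) :
    ∃ U ∈ unitaryGroup n 𝕜, U * Q * Uᴴ = diagonal fun x => if p x then 1 else 0 := by
  have hH : Q.IsHermitian := hQ.isSelfAdjoint
  have h01 := hH.eigenvalues_eq_zero_or_one hQ.isIdempotentElem
  obtain ⟨π, hπ⟩ := Equiv.Perm.exists_iff_of_card_eq (p := p) (q := (hH.eigenvalues · = 1)) <| by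
    rw [← hrank, hH.rank_eq_card_non_zero_eigs]
    exact Fintype.card_congr <| Equiv.subtypeEquivRight fun i => by
      rcases h01 i with h | h <;> simp [h]
  set W : Matrix n n 𝕜 := (hH.eigenvectorUnitary : Matrix n n 𝕜)
  have hW : Wᴴ * Q * W = diagonal (RCLike.ofReal ∘ hH.eigenvalues) := by
    rw [← hH.conjStarAlgAut_star_eigenvectorUnitary, Unitary.conjStarAlgAut_star_apply]; rfl
  have hWu : Wᴴ * W = 1 := Unitary.coe_star_mul_self _
  refine ⟨Wᴴ.submatrix π id, ?_, ?_⟩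
  · have := submatrix_mul_mul_conjTranspose_submatrix Wᴴ 1 π
    rw [mul_one, mul_one, conjTranspose_conjTranspose, hWu, submatrix_one_equiv] at this
    exact mem_unitaryGroup_iff.2 this
  · rw [submatrix_mul_mul_conjTranspose_submatrix, conjTranspose_conjTranspose, hW,
      submatrix_diagonal_equiv]
    congr 1
    funext x
    rcases h01 (π x) with h | h <;> simp [h, ← hπ x]

theorem PosSemidef.exists_eq_re_trace_smul [Nonempty n] {σ : Matrix n n ℂ} (hσ : σ.PosSemidef) :
    ∃ τ : Matrix n n ℂ, τ.PosSemidef ∧ τ.trace = 1 ∧ σ = σ.trace.re • τ := by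
  by_cases h : σ.trace = 0
  · obtain ⟨i⟩ := ‹Nonempty n›
    refine ⟨vecMulVec (Pi.single i 1) (star (Pi.single i 1)), posSemidef_vecMulVec_self_star _,
      by simp [trace_vecMulVec], ?_⟩
    rw [hσ.trace_eq_zero_iff.1 h, trace_zero, Complex.zero_re, zero_smul]
  · have hre : σ.trace.re ≠ 0 := fun h' =>
      h (by rw [← hσ.ofReal_re_trace, h', Complex.ofReal_zero])
    refine ⟨σ.trace.re⁻¹ • σ, hσ.smul (inv_nonneg.2 hσ.re_trace_nonneg), ?_, ?_⟩
    · rw [trace_smul, Complex.real_smul, Complex.ofReal_inv, hσ.ofReal_re_trace,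
        inv_mul_cancel₀ h]
    · rw [smul_smul, mul_inv_cancel₀ hre, one_smul]

theorem re_trace_mul_le_of_mem_unitaryGroup {S X : Matrix n n ℂ} (hS : S ∈ unitaryGroup n ℂ)
    (hX : X.PosSemidef) : (S * X).trace.re ≤ X.trace.re := by
  have := re_trace_mul_mul_conjTranspose_le hX S 1
  rwa [conjTranspose_one, mul_one, mul_one, one_mul,
    trace_mul_mul_conjTranspose_of_mem_unitaryGroup hS,
    Real.mul_self_sqrt hX.re_trace_nonneg] at this

theorem traceNorm_eq_re_trace_abs (A : Matrix n n ℂ) : traceNorm A = (CFC.abs A).trace.re := by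
  have hA := posSemidef_conjTranspose_mul_self A
  rw [CFC.abs, star_eq_conjTranspose, CFC.sqrt_eq_real_sqrt _ hA.nonneg, cfcₙ_eq_cfc,
    hA.1.cfc_eq, IsHermitian.cfc, Unitary.conjStarAlgAut_apply]
  rfl

theorem PosSemidef.traceNorm_eq {A : Matrix n n ℂ} (hA : A.PosSemidef) :
    traceNorm A = A.trace.re := by
  rw [traceNorm_eq_re_trace_abs, CFC.abs_of_nonneg A hA.nonneg]

theorem traceNorm_neg (A : Matrix n n ℂ) : traceNorm (-A) = traceNorm A := by
  simp only [traceNorm_eq_re_trace_abs, CFC.abs_neg]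

theorem IsHermitian.exists_unitary_mul_eq_abs {A : Matrix n n ℂ} (hA : A.IsHermitian) :
    ∃ T ∈ unitaryGroup n ℂ, T * A = CFC.abs A := by
  -- a sign function without the value `0`, so that `cfc sgn A` is unitary
  let sgn : ℝ → ℝ := fun x => if x < 0 then -1 else 1
  have hsgn : ContinuousOn sgn (spectrum ℝ A) := A.finite_real_spectrum.continuousOn sgn
  refine ⟨cfc sgn A, (cfc_unitary_iff sgn A hA.isSelfAdjoint hsgn).2 fun x _ => ?_, ?_⟩
  · simp only [sgn]; split_ifs <;> norm_num
  · rw [CFC.abs_eq_cfc_norm A hA.isSelfAdjoint]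
    nth_rewrite 2 [← cfc_id' ℝ A]
    rw [← cfc_mul sgn _ A hsgn]
    refine cfc_congr fun x _ => ?_
    simp only [sgn, Real.norm_eq_abs]
    split_ifs with h
    · rw [abs_of_neg h]; ring
    · rw [abs_of_nonneg (not_lt.1 h)]; ring

theorem IsHermitian.exists_unitary_re_trace_mul_eq_traceNorm {A : Matrix n n ℂ}
    (hA : A.IsHermitian) : ∃ T ∈ unitaryGroup n ℂ, (T * A).trace.re = traceNorm A := by
  obtain ⟨T, hT, hTA⟩ := hA.exists_unitary_mul_eq_abs
  exact ⟨T, hT, by rw [hTA, traceNorm_eq_re_trace_abs]⟩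

theorem IsHermitian.re_trace_mul_le_traceNorm {S A : Matrix n n ℂ} (hA : A.IsHermitian)
    (hS : S ∈ unitaryGroup n ℂ) : (S * A).trace.re ≤ traceNorm A := by
  obtain ⟨T, hT, hTA⟩ := hA.exists_unitary_mul_eq_abs
  have hA' : S * A = S * star T * CFC.abs A := by
    rw [← hTA, mul_assoc, ← mul_assoc (star T), mem_unitaryGroup_iff'.1 hT, one_mul]
  rw [hA', traceNorm_eq_re_trace_abs]
  exact re_trace_mul_le_of_mem_unitaryGroup (mul_mem hS (Unitary.star_mem hT))
    (CFC.abs_nonneg A).posSemidef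

theorem IsHermitian.traceNorm_add_le {A B : Matrix n n ℂ} (hA : A.IsHermitian)
    (hB : B.IsHermitian) : traceNorm (A + B) ≤ traceNorm A + traceNorm B := by
  obtain ⟨T, hT, hTnorm⟩ := (hA.add hB).exists_unitary_re_trace_mul_eq_traceNorm
  rw [← hTnorm, mul_add, trace_add, Complex.add_re]
  exact add_le_add (hA.re_trace_mul_le_traceNorm hT) (hB.re_trace_mul_le_traceNorm hT)

theorem IsStarProjection.re_trace_mul_le {ρ D : Matrix n n ℂ} (hρ : ρ.PosSemidef)
    (hD : IsStarProjection D) : (D * ρ).trace.re ≤ ρ.trace.re := by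
  have hP := (hρ.mul_mul_same_of_isHermitian hD.one_sub.isSelfAdjoint).re_trace_nonneg
  rw [trace_mul_mul_self_of_isIdempotentElem hD.one_sub.isIdempotentElem, sub_mul, one_mul,
    trace_sub, Complex.sub_re] at hP
  linarith

/-- The gentle measurement lemma. With `P = 1 - D` and `T` the sign of `ρ - DρD`, one has
`T (ρ - DρD) = T ρ P + T P ρ D`, and Cauchy–Schwarz bounds each term by `√(Tr[Pρ])`. -/
theorem traceNorm_sub_mul_mul_le {ρ D : Matrix n n ℂ} (hρ : ρ.PosSemidef) (hρtr : ρ.trace = 1)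
    (hD : IsStarProjection D) : traceNorm (ρ - D * ρ * D) ≤ 2 * √(1 - (D * ρ).trace.re) := by
  set P := 1 - D with hP
  have hDh : Dᴴ = D := hD.isSelfAdjoint
  have hPh : Pᴴ = P := hD.one_sub.isSelfAdjoint
  have hPρ : (P * ρ * Pᴴ).trace.re = 1 - (D * ρ).trace.re := by
    rw [hPh, trace_mul_mul_self_of_isIdempotentElem hD.one_sub.isIdempotentElem, sub_mul,
      one_mul, trace_sub, Complex.sub_re, hρtr, Complex.one_re]
  have ht : √(D * ρ).trace.re ≤ 1 :=
    Real.sqrt_le_one.2 (by simpa [hρtr] using hD.re_trace_mul_le hρ)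
  obtain ⟨T, hT, hTnorm⟩ := (hρ.1.sub (hρ.mul_mul_same_of_isHermitian hD.isSelfAdjoint).1)
    |>.exists_unitary_re_trace_mul_eq_traceNorm
  have hsplit : T * (ρ - D * ρ * D) = T * ρ * Pᴴ + T * P * ρ * D := by
    rw [hPh, hP]; noncomm_ring
  have h₁ := re_trace_mul_mul_conjTranspose_le hρ T P
  rw [trace_mul_mul_conjTranspose_of_mem_unitaryGroup hT, hρtr, Complex.one_re, Real.sqrt_one,
    hPρ] at h₁
  have h₂ := re_trace_mul_mul_conjTranspose_le hρ (T * P) D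
  rw [conjTranspose_mul, show T * P * ρ * (Pᴴ * Tᴴ) = T * (P * ρ * Pᴴ) * Tᴴ by noncomm_ring,
    trace_mul_mul_conjTranspose_of_mem_unitaryGroup hT, hPρ, hDh,
    trace_mul_mul_self_of_isIdempotentElem hD.isIdempotentElem] at h₂
  rw [← hTnorm, hsplit, trace_add, Complex.add_re]
  nlinarith [Real.sqrt_nonneg (1 - (D * ρ).trace.re)]

end

section

variable {m k : Type*} [Fintype m] [DecidableEq m] [Fintype k] [DecidableEq k]

theorem diagonal_ite_mul_mul_diagonal_ite {R : Type*} [CommSemiring R] [StarRing R]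
    (ρ : Matrix (m × k) (m × k) R) (k₀ : k) :
    (diagonal fun x : m × k => if x.2 = k₀ then 1 else 0) * ρ *
        (diagonal fun x : m × k => if x.2 = k₀ then 1 else 0) =
      ρ.submatrix (·, k₀) (·, k₀) ⊗ₖ vecMulVec (Pi.single k₀ 1) (star (Pi.single k₀ 1)) := by
  ext ⟨i, a⟩ ⟨j, b⟩
  by_cases ha : a = k₀ <;> by_cases hb : b = k₀ <;> simp [ha, hb, vecMulVec_apply]

theorem exists_traceNorm_sub_kronecker_le [Nonempty m] {ρ : Matrix (m × k) (m × k) ℂ}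
    (hρ : ρ.PosSemidef) (hρtr : ρ.trace = 1) (k₀ : k) :
    ∃ τ : Matrix m m ℂ, τ.PosSemidef ∧ τ.trace = 1 ∧
      traceNorm (ρ - τ ⊗ₖ vecMulVec (Pi.single k₀ 1) (star (Pi.single k₀ 1))) ≤
        3 * √(1 - ((diagonal fun x : m × k => if x.2 = k₀ then 1 else 0) * ρ).trace.re) := by
  set D : Matrix (m × k) (m × k) ℂ := diagonal fun x => if x.2 = k₀ then 1 else 0
  set E : Matrix k k ℂ := vecMulVec (Pi.single k₀ 1) (star (Pi.single k₀ 1))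
  set σ := ρ.submatrix (·, k₀) (·, k₀)
  set t := (D * ρ).trace.re
  have hD : IsStarProjection D := isStarProjection_diagonal_ite _
  have hE : E.PosSemidef := posSemidef_vecMulVec_self_star _
  have hEtr : E.trace = 1 := by simp [E, trace_vecMulVec]
  have hDρD : D * ρ * D = σ ⊗ₖ E := diagonal_ite_mul_mul_diagonal_ite ρ k₀
  have hσ : σ.PosSemidef := hρ.submatrix _
  obtain ⟨τ, hτ, hτtr, hστ⟩ := hσ.exists_eq_re_trace_smul
  have hσt : σ.trace.re = t := by
    show _ = (D * ρ).trace.re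
    rw [← trace_mul_mul_self_of_isIdempotentElem hD.isIdempotentElem, hDρD, trace_kronecker,
      hEtr, mul_one]
  have ht₀ : 0 ≤ 1 - t := by
    have := hD.re_trace_mul_le hρ
    rw [hρtr, Complex.one_re] at this
    linarith
  have ht₁ : 1 - t ≤ 1 := by linarith [hσ.re_trace_nonneg]
  have hτE : ((1 - t) • τ ⊗ₖ E).PosSemidef := (hτ.kronecker hE).smul ht₀
  have hsplit : ρ - τ ⊗ₖ E = (ρ - D * ρ * D) + -((1 - t) • τ ⊗ₖ E) := by
    rw [hDρD, hστ, hσt, smul_kronecker, sub_smul, one_smul]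
    abel
  refine ⟨τ, hτ, hτtr, ?_⟩
  calc traceNorm (ρ - τ ⊗ₖ E)
      ≤ traceNorm (ρ - D * ρ * D) + traceNorm (-((1 - t) • τ ⊗ₖ E)) := by
        rw [hsplit]
        exact (hρ.1.sub (hρ.mul_mul_same_of_isHermitian hD.isSelfAdjoint).1).traceNorm_add_le
          hτE.1.neg
    _ = traceNorm (ρ - D * ρ * D) + (1 - t) := by
        rw [traceNorm_neg, hτE.traceNorm_eq, trace_smul, trace_kronecker, hτtr, hEtr, mul_one,
          Complex.real_smul, mul_one, Complex.ofReal_re]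
    _ ≤ 2 * √(1 - t) + √(1 - t) :=
        add_le_add (traceNorm_sub_mul_mul_le hρ hρtr hD) (Real.le_sqrt_self_iff.2 ht₁)
    _ = 3 * √(1 - t) := by ring

end

end Matrix

theorem purity_concentration_local_general {d₁ d₂ : ℕ} (ε : ℝ)
    (ρ : Matrix (Fin d₁ × Fin d₂) (Fin d₁ × Fin d₂) ℂ)
    (hρ : ρ.PosSemidef) (hρtr : ρ.trace = 1)
    (Q : Matrix (Fin d₁ × Fin d₂) (Fin d₁ × Fin d₂) ℂ)
    (hQherm : Qᴴ = Q) (hQproj : Q * Q = Q) (hQrank : Q.rank = d₁)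
    (hQρ : 1 - ε ≤ ((Q * ρ).trace).re) :
    ∃ U : Matrix (Fin d₁ × Fin d₂) (Fin d₁ × Fin d₂) ℂ,
      U ∈ Matrix.unitaryGroup (Fin d₁ × Fin d₂) ℂ ∧
      ∃ ρt : Matrix (Fin d₁) (Fin d₁) ℂ, ρt.PosSemidef ∧ ρt.trace = 1 ∧
      ∃ v : Fin d₂ → ℂ, (∑ i, Complex.normSq (v i)) = 1 ∧
        traceNorm (U * ρ * Uᴴ - ρt ⊗ₖ Matrix.vecMulVec v (star v)) ≤ 3 * Real.sqrt ε := by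
  obtain ⟨⟨i₀, k₀⟩⟩ : Nonempty (Fin d₁ × Fin d₂) := by
    by_contra h
    simp [trace, not_nonempty_iff.1 h] at hρtr
  have : Nonempty (Fin d₁) := ⟨i₀⟩
  have hcard : Q.rank = Fintype.card {x : Fin d₁ × Fin d₂ // x.2 = k₀} := by
    rw [hQrank, Fintype.card_congr (Equiv.subtypeProdEquivSigmaSubtype fun _ b => b = k₀)]
    simp
  obtain ⟨U, hU, hUQ⟩ := IsStarProjection.exists_unitary_conj_eq_diagonal ⟨hQproj, hQherm⟩ _ hcard
  obtain ⟨τ, hτ, hτtr, hτρ⟩ := exists_traceNorm_sub_kronecker_le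
    (hρ.mul_mul_conjTranspose_same U)
    (by rw [trace_mul_mul_conjTranspose_of_mem_unitaryGroup hU, hρtr]) k₀
  refine ⟨U, hU, τ, hτ, hτtr, Pi.single k₀ 1, by simp [Pi.single_apply], hτρ.trans ?_⟩
  have hconj : U * Q * Uᴴ * (U * ρ * Uᴴ) = U * (Q * ρ) * Uᴴ := by
    simp only [mul_assoc]
    rw [← mul_assoc Uᴴ U, ← star_eq_conjTranspose, mem_unitaryGroup_iff'.1 hU, one_mul]
  rw [← hUQ, hconj, trace_mul_mul_conjTranspose_of_mem_unitaryGroup hU]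
  gcongr
  linarith

/-- if `Tr[Πρ] ≥ 1 - ε` with `Π` a rank-`d₁` projector on `A ≅ A_g ⊗ A_p`,
then there is a unitary `U`, a density matrix `ρ̃` on `A_g` and a unit vector `v ∈ A_p`
with `‖U ρ U† - ρ̃ ⊗ |v⟩⟨v|‖₁ ≤ 3√ε`. -/
theorem purity_concentration_local {d₁ d₂ : ℕ} (ε : ℝ) (hε : ε ∈ Set.Icc (0 : ℝ) 1)
    (ρ : Matrix (Fin d₁ × Fin d₂) (Fin d₁ × Fin d₂) ℂ)
    (hρ : ρ.PosSemidef) (hρtr : ρ.trace = 1)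
    (Q : Matrix (Fin d₁ × Fin d₂) (Fin d₁ × Fin d₂) ℂ)
    (hQherm : Qᴴ = Q) (hQproj : Q * Q = Q) (hQrank : Q.rank = d₁)
    (hQρ : 1 - ε ≤ ((Q * ρ).trace).re) :
    ∃ U : Matrix (Fin d₁ × Fin d₂) (Fin d₁ × Fin d₂) ℂ,
      U ∈ Matrix.unitaryGroup (Fin d₁ × Fin d₂) ℂ ∧
      ∃ ρt : Matrix (Fin d₁) (Fin d₁) ℂ, ρt.PosSemidef ∧ ρt.trace = 1 ∧
      ∃ v : Fin d₂ → ℂ, (∑ i, Complex.normSq (v i)) = 1 ∧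
        traceNorm (U * ρ * Uᴴ - ρt ⊗ₖ Matrix.vecMulVec v (star v)) ≤ 3 * Real.sqrt ε :=
  purity_concentration_local_general ε ρ hρ hρtr Q hQherm hQproj hQrank hQρ
end

section
/- Let P and Q be probability distributions on a finite set 𝒳 with ‖P − Q‖₁ ≤ ε (total variation in 1-norm). Then there exists a subset G ⊆ 𝒳 such that P(G) ≥ 1 − √ε and Q(x) ≤ (1 + √ε)·P(x) for every x ∈ G. -/
open BigOperators

/-- if `‖P − Q‖₁ ≤ ε` for probability distributions `P, Q` on a finite set,
then there is a subset `G` with `P(G) ≥ 1 − √ε` and `Q(x) ≤ (1+√ε)·P(x)` on `G`. -/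
theorem good_set_of_close_distributions {𝒳 : Type*} [Fintype 𝒳]
    (ε : ℝ) (hε : ε ∈ Set.Icc (0 : ℝ) 1)
    (P Q : 𝒳 → ℝ) (hP : ∀ x, 0 ≤ P x) (hPsum : ∑ x, P x = 1)
    (hQ : ∀ x, 0 ≤ Q x) (hQsum : ∑ x, Q x = 1)
    (hclose : ∑ x, |P x - Q x| ≤ ε) :
    ∃ G : Finset 𝒳, 1 - Real.sqrt ε ≤ ∑ x ∈ G, P x ∧
      ∀ x ∈ G, Q x ≤ (1 + Real.sqrt ε) * P x := by
  classical
  obtain ⟨hε0, hε1⟩ := hε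
  set s := Real.sqrt ε with hs
  have hs0 : 0 ≤ s := Real.sqrt_nonneg ε
  set G : Finset 𝒳 := Finset.univ.filter (fun x => Q x ≤ (1 + s) * P x) with hG
  refine ⟨G, ?_, fun x hx => (Finset.mem_filter.mp hx).2⟩
  -- B = complement
  set B : Finset 𝒳 := Gᶜ with hB
  have hsplit : ∑ x ∈ G, P x + ∑ x ∈ B, P x = 1 := by
    rw [hB, Finset.sum_add_sum_compl, hPsum]
  have hBbound : ∀ x ∈ B, s * P x ≤ |P x - Q x| := by
    intro x hxB
    have hx : ¬ Q x ≤ (1 + s) * P x := by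
      have := Finset.mem_compl.mp hxB
      simpa [hG] using this
    have hlt : (1 + s) * P x < Q x := lt_of_not_ge hx
    have h1 : s * P x ≤ Q x - P x := by nlinarith [hP x]
    have h2 : Q x - P x ≤ |P x - Q x| := by
      rw [abs_sub_comm]; exact le_abs_self _
    linarith
  have hkey : s * ∑ x ∈ B, P x ≤ ε := by
    rw [Finset.mul_sum]
    calc ∑ x ∈ B, s * P x ≤ ∑ x ∈ B, |P x - Q x| := Finset.sum_le_sum hBbound
      _ ≤ ∑ x, |P x - Q x| := Finset.sum_le_sum_of_subset_of_nonneg (Finset.subset_univ _)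
          (fun x _ _ => abs_nonneg _)
      _ ≤ ε := hclose
  have hPB : ∑ x ∈ B, P x ≤ s := by
    rcases eq_or_lt_of_le hs0 with h0 | h0
    · -- s = 0, hence ε = 0, hence P = Q, B empty
      have hε0' : ε = 0 := by
        have := Real.sq_sqrt hε0
        rw [← hs, ← h0] at this
        simpa using this.symm
      have hall : ∀ x, |P x - Q x| = 0 := by
        intro x
        have hnn : ∀ y ∈ Finset.univ, 0 ≤ |P y - Q y| := fun y _ => abs_nonneg _
        have hle : ∑ x, |P x - Q x| ≤ 0 := by rw [hε0'] at hclose; exact hclose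
        have := Finset.sum_eq_zero_iff_of_nonneg hnn
        have hz : ∑ x, |P x - Q x| = 0 := le_antisymm hle (Finset.sum_nonneg hnn)
        exact (this.mp hz) x (Finset.mem_univ x)
      have : B = ∅ := by
        rw [hB, Finset.compl_eq_empty_iff, hG, Finset.eq_univ_iff_forall]
        intro x
        have : P x = Q x := by have := hall x; rwa [abs_eq_zero, sub_eq_zero] at this
        simp [Finset.mem_filter, ← this]
        nlinarith [hP x, hs0]
      simp [this, ← h0]
    · have hε' : ε = s * s := (Real.mul_self_sqrt hε0).symm
      rw [hε'] at hkey
      exact le_of_mul_le_mul_left hkey h0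
  linarith
end

section
/- (Sen's non-commutative union bound) Let ρ be a positive semidefinite operator with Tr[ρ] ≤ 1, and let Π₁, …, Π_k be orthogonal projectors with complements Π_i' = I − Π_i. Then Tr[Π_k Π_{k−1} ⋯ Π₁ ρ Π₁† ⋯ Π_{k−1}† Π_k†] ≥ Tr[ρ] − 2·√(Σ_{i=1}^k Tr[Π_i' ρ]). -/
/-!
Write `ρ = S Sᴴ`, so that `Tr[M ρ Mᴴ] = ‖M S‖²` in the Frobenius norm, and let `P = Π_k ⋯ Π₁`.
Since `S - Π_k ⋯ Π₁ S = (1 - Π_k) S + Π_k (S - Π_{k-1} ⋯ Π₁ S)` is an orthogonal decomposition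
and projections are contractions, induction gives `‖S - P S‖² ≤ ∑ ‖(1 - Π_i) S‖² = ∑ Tr[Π_i' ρ]`.
Finally `‖S‖² - ‖P S‖² ≤ 2 ‖S‖ ‖S - P S‖` and `‖S‖² = Tr ρ ≤ 1`.
-/

open Matrix BigOperators ComplexOrder

theorem Matrix.PosSemidef.exists_eq_mul_conjTranspose {𝕜 n : Type*} [RCLike 𝕜] [Fintype n]
    {ρ : Matrix n n 𝕜} (hρ : ρ.PosSemidef) : ∃ S : Matrix n n 𝕜, ρ = S * Sᴴ := by
  classical
  open scoped MatrixOrder in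
  have hsqrt : (CFC.sqrt ρ)ᴴ = CFC.sqrt ρ := (CFC.sqrt_nonneg ρ).isSelfAdjoint
  exact ⟨CFC.sqrt ρ, by rw [hsqrt, CFC.sqrt_mul_sqrt_self ρ hρ.nonneg]⟩

theorem norm_sq_sub_norm_sq_le_of_norm_le {E : Type*} [SeminormedAddCommGroup E] {x y : E}
    (h : ‖y‖ ≤ ‖x‖) : ‖x‖ ^ 2 - ‖y‖ ^ 2 ≤ 2 * ‖x‖ * ‖x - y‖ := by
  nlinarith [norm_sub_norm_le x y, norm_nonneg y]

attribute [local instance] Matrix.frobeniusNormedAddCommGroup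

namespace Matrix

variable {𝕜 l m n : Type*} [RCLike 𝕜] [Fintype l] [Fintype m] [Fintype n]

theorem frobenius_norm_sq_eq_re_trace (A : Matrix m n 𝕜) :
    ‖A‖ ^ 2 = RCLike.re (Aᴴ * A).trace := by
  rw [frobenius_norm_def, ← Real.rpow_natCast, ← Real.rpow_mul (by positivity)]
  simp [Matrix.trace, Matrix.mul_apply, RCLike.conj_mul, Finset.sum_comm (γ := m)]

theorem re_trace_mul_mul_conjTranspose (M : Matrix m n 𝕜) (S : Matrix n l 𝕜) :
    RCLike.re (M * (S * Sᴴ) * Mᴴ).trace = ‖M * S‖ ^ 2 := by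
  rw [frobenius_norm_sq_eq_re_trace, trace_mul_comm (M * S)ᴴ, conjTranspose_mul]
  simp only [Matrix.mul_assoc]

theorem frobenius_norm_add_sq_of_conjTranspose_mul_eq_zero {A B : Matrix m n 𝕜}
    (h : Aᴴ * B = 0) : ‖A + B‖ ^ 2 = ‖A‖ ^ 2 + ‖B‖ ^ 2 := by
  have h' : Bᴴ * A = 0 := by
    rw [← conjTranspose_conjTranspose A, ← conjTranspose_mul, h, conjTranspose_zero]
  rw [frobenius_norm_sq_eq_re_trace, conjTranspose_add, Matrix.add_mul, Matrix.mul_add,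
    Matrix.mul_add, h, h', add_zero, zero_add, trace_add, map_add,
    frobenius_norm_sq_eq_re_trace, frobenius_norm_sq_eq_re_trace]

end Matrix

namespace IsStarProjection

variable {𝕜 n : Type*} [RCLike 𝕜] [Fintype n] {Q : Matrix n n 𝕜}

theorem trace_mul_mul_conjTranspose (hQ : IsStarProjection Q) (A : Matrix n n 𝕜) :
    (Q * A * Qᴴ).trace = (Q * A).trace := by
  have hQ' : Qᴴ = Q := hQ.isSelfAdjoint
  rw [trace_mul_comm, hQ', ← mul_assoc, hQ.isIdempotentElem.eq]

variable [DecidableEq n]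

theorem frobenius_norm_one_sub_mul_add_mul_sq (hQ : IsStarProjection Q) (C D : Matrix n n 𝕜) :
    ‖(1 - Q) * C + Q * D‖ ^ 2 = ‖(1 - Q) * C‖ ^ 2 + ‖Q * D‖ ^ 2 := by
  refine frobenius_norm_add_sq_of_conjTranspose_mul_eq_zero ?_
  have hQ' : (1 - Q)ᴴ = 1 - Q := hQ.one_sub.isSelfAdjoint
  rw [conjTranspose_mul, hQ', mul_assoc, ← mul_assoc (1 - Q), hQ.one_sub_mul_self,
    Matrix.zero_mul, Matrix.mul_zero]

theorem frobenius_norm_mul_le (hQ : IsStarProjection Q) (X : Matrix n n 𝕜) : ‖Q * X‖ ≤ ‖X‖ := by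
  have hX : ‖X‖ ^ 2 = ‖(1 - Q) * X‖ ^ 2 + ‖Q * X‖ ^ 2 := by
    rw [← hQ.frobenius_norm_one_sub_mul_add_mul_sq, ← Matrix.add_mul, sub_add_cancel,
      Matrix.one_mul]
  refine (pow_le_pow_iff_left₀ (norm_nonneg _) (norm_nonneg _) two_ne_zero).mp ?_
  rw [hX]
  exact le_add_of_nonneg_left (sq_nonneg _)

end IsStarProjection

namespace Matrix

variable {𝕜 n : Type*} [RCLike 𝕜] [Fintype n] [DecidableEq n]

theorem frobenius_norm_list_prod_mul_le {L : List (Matrix n n 𝕜)}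
    (hL : ∀ Q ∈ L, IsStarProjection Q) (X : Matrix n n 𝕜) : ‖L.prod * X‖ ≤ ‖X‖ := by
  induction L with
  | nil => rw [List.prod_nil, Matrix.one_mul]
  | cons Q L ih =>
    rw [List.forall_mem_cons] at hL
    rw [List.prod_cons, mul_assoc]
    exact (hL.1.frobenius_norm_mul_le _).trans (ih hL.2)

theorem frobenius_norm_sub_list_prod_mul_sq_le {L : List (Matrix n n 𝕜)}
    (hL : ∀ Q ∈ L, IsStarProjection Q) (X : Matrix n n 𝕜) :
    ‖X - L.prod * X‖ ^ 2 ≤ (L.map fun Q => ‖(1 - Q) * X‖ ^ 2).sum := by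
  induction L with
  | nil => simp
  | cons Q L ih =>
    rw [List.forall_mem_cons] at hL
    have hsplit : X - (Q :: L).prod * X = (1 - Q) * X + Q * (X - L.prod * X) := by
      rw [List.prod_cons, mul_assoc, Matrix.sub_mul, Matrix.one_mul, Matrix.mul_sub]
      abel
    rw [hsplit, hL.1.frobenius_norm_one_sub_mul_add_mul_sq, List.map_cons, List.sum_cons]
    gcongr
    exact (pow_le_pow_left₀ (norm_nonneg _) (hL.1.frobenius_norm_mul_le _) 2).trans (ih hL.2)

end Matrix

/-- Sen's non-commutative union bound:
`Tr[Π_k ⋯ Π₁ ρ Π₁† ⋯ Π_k†] ≥ Tr[ρ] − 2√(Σ_i Tr[(I − Π_i)ρ])`. -/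
theorem sen_noncommutative_union_bound {n : Type*} [Fintype n] [DecidableEq n]
    (ρ : Matrix n n ℂ) (hρ : ρ.PosSemidef) (htr : ρ.trace.re ≤ 1)
    (k : ℕ) (Pj : Fin k → Matrix n n ℂ)
    (hherm : ∀ i, (Pj i)ᴴ = Pj i) (hproj : ∀ i, Pj i * Pj i = Pj i) :
    ρ.trace.re - 2 * Real.sqrt (∑ i, (((1 - Pj i) * ρ).trace).re)
      ≤ (((List.ofFn Pj).reverse.prod) * ρ * ((List.ofFn Pj).reverse.prod)ᴴ).trace.re := by
  obtain ⟨S, rfl⟩ := hρ.exists_eq_mul_conjTranspose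
  have hP (i : Fin k) : IsStarProjection (Pj i) := ⟨hproj i, hherm i⟩
  set L := (List.ofFn Pj).reverse
  have hL : ∀ Q ∈ L, IsStarProjection Q := by
    simp only [L, List.mem_reverse, List.mem_ofFn]
    rintro _ ⟨i, rfl⟩
    exact hP i
  set c := ∑ i, (((1 - Pj i) * (S * Sᴴ)).trace).re
  have hdefect : c = (L.map fun Q => ‖(1 - Q) * S‖ ^ 2).sum := by
    rw [List.map_reverse, List.sum_reverse, List.map_ofFn, List.sum_ofFn]
    refine Finset.sum_congr rfl fun i _ => ?_
    rw [← (hP i).one_sub.trace_mul_mul_conjTranspose]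
    exact re_trace_mul_mul_conjTranspose (1 - Pj i) S
  have htrace : (S * Sᴴ).trace.re = ‖S‖ ^ 2 := by
    simpa using re_trace_mul_mul_conjTranspose (1 : Matrix n n ℂ) S
  have hS : ‖S‖ ≤ 1 := (sq_le_one_iff₀ (norm_nonneg S)).mp (htrace ▸ htr)
  have herr : ‖S - L.prod * S‖ ≤ √c :=
    Real.le_sqrt_of_sq_le ((frobenius_norm_sub_list_prod_mul_sq_le hL S).trans_eq hdefect.symm)
  calc (S * Sᴴ).trace.re - 2 * √c
      ≤ ‖S‖ ^ 2 - 2 * ‖S‖ * ‖S - L.prod * S‖ := by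
        rw [htrace]
        linarith [mul_le_of_le_one_left (norm_nonneg (S - L.prod * S)) hS]
    _ ≤ ‖L.prod * S‖ ^ 2 := by
        linarith [norm_sq_sub_norm_sq_le_of_norm_le (frobenius_norm_list_prod_mul_le hL S)]
    _ = _ := (re_trace_mul_mul_conjTranspose _ S).symm
end

section
/- Let P_X be a probability distribution on a finite set 𝒳, and let P'_X be the sub-distribution obtained by setting P'_X(x) = 0 on the set S_bad of symbols carrying the smallest probabilities, chosen so that P_X(S_bad) ≤ ε, and P'_X = P_X elsewhere. Then for every x in the support of P'_X, one has P'_X(x) ≥ ε/|𝒳|, i.e., 1/P'_X(x) ≤ |𝒳|/ε. -/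
open BigOperators

/-- if `S` is a (maximal) set of symbols of smallest probability with
`P(S) ≤ ε`, then every symbol outside `S` has probability at least `ε/|𝒳|`. -/
theorem trimmed_support_prob_lower_bound {𝒳 : Type*} [Fintype 𝒳]
    (ε : ℝ) (hε0 : 0 < ε) (hε1 : ε ≤ 1)
    (P : 𝒳 → ℝ) (hP : ∀ x, 0 ≤ P x) (hPsum : ∑ x, P x = 1)
    (S : Finset 𝒳)
    (hSsum : ∑ x ∈ S, P x ≤ ε)
    (hSsmall : ∀ x ∉ S, ∀ y ∈ S, P y ≤ P x)
    (hSmax : ∀ x ∉ S, ε < (∑ y ∈ S, P y) + P x) :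
    ∀ x ∉ S, ε / (Fintype.card 𝒳) ≤ P x := by
  intro x hx
  have hPx : 0 ≤ P x := hP x
  have hSle : ∑ y ∈ S, P y ≤ S.card * P x := by
    calc ∑ y ∈ S, P y ≤ ∑ _y ∈ S, P x :=
          Finset.sum_le_sum (fun y hy => hSsmall x hx y hy)
      _ = S.card * P x := by simp [Finset.sum_const, nsmul_eq_mul]
  have hε : ε < (S.card + 1) * P x := by
    have := hSmax x hx
    nlinarith
  have hcard : (S.card : ℝ) + 1 ≤ (Fintype.card 𝒳 : ℝ) := by
    have : S.card + 1 ≤ Fintype.card 𝒳 := by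
      have hss : S ⊂ Finset.univ := Finset.ssubset_univ_iff.mpr
        (by intro h; subst h; exact hx (Finset.mem_univ x))
      have := Finset.card_lt_card hss
      simpa [Finset.card_univ] using this
    exact_mod_cast this
  have hcard0 : (0:ℝ) < Fintype.card 𝒳 := by linarith [Nat.cast_nonneg (α := ℝ) S.card]
  rw [div_le_iff₀ hcard0, mul_comm]
  calc ε ≤ (S.card + 1) * P x := hε.le
    _ ≤ (Fintype.card 𝒳 : ℝ) * P x := by nlinarith
end
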